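/- With A_m and ∂ as above and j^{2m} = ω_{0,2m}, the sets {∂^{2i} j^{2m−2i} : 0 ≤ i ≤ m} and {∂^{2i+1} j^{2m−2i} : 0 ≤ i ≤ m} are bases of A_{2m} and A_{2m+1}, respectively. -/

import Mathlib

/-!
The linear map sending `ω_{a,b}` to the polynomial `(X - 1)^a + (X - 1)^b` turns `∂` into
multiplication by `X`, so `∂^{2i+c} j^{2m-2i}` goes to `X^{2i+c} (1 + (X - 1)^{2m-2i})`. The
second factor has constant term `2`, so these images have pairwise distinct trailing degrees
`2i + c` and are linearly independent, hence so are the `m + 1` vectors themselves. They lie in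
`A_{2m+c}`, which for `c ≤ 1` is spanned by the `m + 1` vectors `ω_{a, 2m+c-a}`, `a ≤ m`; so they
form a basis.
-/

/-- The basis symbol `ω_{a,b} = ω_{b,a}`, modelled in `(ℕ × ℕ) →₀ ℂ` as the
single basis vector indexed by the sorted pair. -/
noncomputable def w (a b : ℕ) : (ℕ × ℕ) →₀ ℂ :=
  Finsupp.single (if a ≤ b then (a, b) else (b, a)) 1

/-- The graded piece `A_m`, the span of `{ω_{a,b} : a + b = m}`. -/
noncomputable def Asp (m : ℕ) : Submodule ℂ ((ℕ × ℕ) →₀ ℂ) :=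
  Submodule.span ℂ {x | ∃ a b : ℕ, a + b = m ∧ x = w a b}

open Polynomial Submodule Module Function

theorem Polynomial.linearIndependent_of_injective_natTrailingDegree {R ι : Type*} [Ring R]
    [NoZeroDivisors R] {p : ι → R[X]} (hp : ∀ i, p i ≠ 0)
    (hinj : Injective fun i => (p i).natTrailingDegree) : LinearIndependent R p := by
  classical
  rw [linearIndependent_iff']
  intro s g hsum i hi
  by_contra hgi
  obtain ⟨j, hj, hmin⟩ := (s.filter (g · ≠ 0)).exists_min_image
    (fun l => (p l).natTrailingDegree) ⟨i, Finset.mem_filter.2 ⟨hi, hgi⟩⟩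
  obtain ⟨hjs, hgj⟩ := Finset.mem_filter.1 hj
  have hcoeff :
      (∑ l ∈ s, g l • p l).coeff (p j).natTrailingDegree = g j * (p j).trailingCoeff := by
    rw [finsetSum_coeff, Finset.sum_eq_single_of_mem j hjs, coeff_smul, smul_eq_mul,
      trailingCoeff]
    intro l hls hlj
    by_cases hgl : g l = 0
    · simp [hgl]
    have hlt : (p j).natTrailingDegree < (p l).natTrailingDegree :=
      (hmin l (Finset.mem_filter.2 ⟨hls, hgl⟩)).lt_of_ne fun h => hlj (hinj h).symm
    rw [coeff_smul, coeff_eq_zero_of_lt_natTrailingDegree hlt, smul_zero]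
  rw [hsum, coeff_zero, eq_comm] at hcoeff
  exact mul_ne_zero hgj (trailingCoeff_nonzero_iff_nonzero.2 (hp j)) hcoeff

theorem LinearIndependent.span_range_eq_of_finrank_le {K V ι : Type*} [DivisionRing K]
    [AddCommGroup V] [Module K V] [Fintype ι] {v : ι → V} (hv : LinearIndependent K v)
    {S : Submodule K V} [FiniteDimensional K S] (hvS : ∀ i, v i ∈ S)
    (hS : finrank K S ≤ Fintype.card ι) : span K (Set.range v) = S :=
  eq_of_le_of_finrank_le (span_le.2 (Set.range_subset_iff.2 hvS))
    (by rwa [finrank_span_eq_card hv])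

lemma Polynomial.coeff_zero_one_add_X_sub_one_pow {R : Type*} [CommRing R] {n : ℕ} (hn : Even n) :
    (1 + (X - 1 : R[X]) ^ n).coeff 0 = 2 := by
  rw [coeff_zero_eq_eval_zero]
  simp [hn.neg_one_pow, one_add_one_eq_two]

lemma w_comm (a b : ℕ) : w a b = w b a := by
  unfold w
  rcases lt_trichotomy a b with h | rfl | h
  · rw [if_pos h.le, if_neg h.not_ge]
  · rfl
  · rw [if_neg h.not_ge, if_pos h.le]

lemma w_mem_Asp {a b M : ℕ} (h : a + b = M) : w a b ∈ Asp M :=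
  subset_span ⟨a, b, h, rfl⟩

lemma Asp_eq_span_range (M : ℕ) :
    Asp M = span ℂ (Set.range fun a : Fin (M / 2 + 1) => w a (M - a)) := by
  refine le_antisymm (span_le.2 ?_) (span_le.2 ?_)
  · rintro _ ⟨a, b, rfl, rfl⟩
    rcases le_total a b with h | h
    · exact subset_span ⟨⟨a, by omega⟩, by simp⟩
    · exact subset_span ⟨⟨b, by omega⟩, by simp [w_comm a b]⟩
  · rintro _ ⟨a, rfl⟩
    exact w_mem_Asp (by omega)

instance (M : ℕ) : FiniteDimensional ℂ (Asp M) := by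
  rw [Asp_eq_span_range]
  exact FiniteDimensional.span_of_finite ℂ (Set.finite_range _)

lemma finrank_Asp_le (M : ℕ) : finrank ℂ (Asp M) ≤ M / 2 + 1 := by
  rw [Asp_eq_span_range]
  exact (finrank_range_le_card _).trans (Fintype.card_fin _).le

noncomputable def wPoly : ((ℕ × ℕ) →₀ ℂ) →ₗ[ℂ] ℂ[X] :=
  Finsupp.linearCombination ℂ fun p => (X - 1) ^ p.1 + (X - 1) ^ p.2

lemma wPoly_w (a b : ℕ) : wPoly (w a b) = (X - 1) ^ a + (X - 1) ^ b := by
  unfold wPoly w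
  split_ifs <;> simp [add_comm]

section Derivative

variable {D : ((ℕ × ℕ) →₀ ℂ) →ₗ[ℂ] ((ℕ × ℕ) →₀ ℂ)}

lemma apply_mem_Asp (hD : ∀ a b : ℕ, D (w a b) = w (a + 1) b + w a (b + 1)) {M : ℕ}
    {f : (ℕ × ℕ) →₀ ℂ} (hf : f ∈ Asp M) : D f ∈ Asp (M + 1) := by
  refine (span_le (p := (Asp (M + 1)).comap D)).2 ?_ hf
  rintro _ ⟨a, b, rfl, rfl⟩
  rw [SetLike.mem_coe, mem_comap, hD]
  exact add_mem (w_mem_Asp (by omega)) (w_mem_Asp (by omega))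

lemma pow_apply_mem_Asp (hD : ∀ a b : ℕ, D (w a b) = w (a + 1) b + w a (b + 1)) (k : ℕ)
    {M : ℕ} {f : (ℕ × ℕ) →₀ ℂ} (hf : f ∈ Asp M) : (D ^ k) f ∈ Asp (M + k) := by
  induction k with
  | zero => simpa using hf
  | succ k ih => rw [pow_succ', Module.End.mul_apply, ← add_assoc]; exact apply_mem_Asp hD ih

lemma wPoly_apply (hD : ∀ a b : ℕ, D (w a b) = w (a + 1) b + w a (b + 1)) {M : ℕ}
    {f : (ℕ × ℕ) →₀ ℂ} (hf : f ∈ Asp M) : wPoly (D f) = X * wPoly f := by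
  refine LinearMap.eqOn_span' (f := wPoly ∘ₗ D) (g := LinearMap.mulLeft ℂ X ∘ₗ wPoly) ?_ hf
  rintro _ ⟨a, b, -, rfl⟩
  simp only [LinearMap.comp_apply, LinearMap.mulLeft_apply, hD, map_add, wPoly_w]
  ring

lemma wPoly_pow_apply (hD : ∀ a b : ℕ, D (w a b) = w (a + 1) b + w a (b + 1)) (k : ℕ)
    {M : ℕ} {f : (ℕ × ℕ) →₀ ℂ} (hf : f ∈ Asp M) : wPoly ((D ^ k) f) = X ^ k * wPoly f := by
  induction k with
  | zero => simp
  | succ k ih =>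
    rw [pow_succ', Module.End.mul_apply, wPoly_apply hD (pow_apply_mem_Asp hD k hf), ih, pow_succ',
      mul_assoc]

lemma linearIndependent_pow_apply_w (hD : ∀ a b : ℕ, D (w a b) = w (a + 1) b + w a (b + 1))
    (m c : ℕ) :
    LinearIndependent ℂ fun i : Fin (m + 1) =>
      (D ^ (2 * (i : ℕ) + c)) (w 0 (2 * m - 2 * (i : ℕ))) := by
  set q : Fin (m + 1) → ℂ[X] := fun i => 1 + (X - 1) ^ (2 * m - 2 * (i : ℕ))
  have hq (i : Fin (m + 1)) : (q i).coeff 0 ≠ 0 := by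
    rw [coeff_zero_one_add_X_sub_one_pow ⟨m - i, by omega⟩]
    exact two_ne_zero
  have hq₀ (i : Fin (m + 1)) : q i ≠ 0 := fun h => hq i (by rw [h, coeff_zero])
  have hwPoly (i : Fin (m + 1)) :
      wPoly ((D ^ (2 * (i : ℕ) + c)) (w 0 (2 * m - 2 * (i : ℕ)))) =
        q i * X ^ (2 * (i : ℕ) + c) := by
    rw [wPoly_pow_apply hD _ (w_mem_Asp rfl), wPoly_w, pow_zero, add_comm, mul_comm]
  have hdeg (i : Fin (m + 1)) : (q i * X ^ (2 * (i : ℕ) + c)).natTrailingDegree = 2 * i + c := by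
    rw [natTrailingDegree_mul_X_pow (hq₀ i), natTrailingDegree_eq_zero.2 (Or.inr (hq i)), zero_add]
  refine .of_comp wPoly ?_
  simp only [Function.comp_def, hwPoly]
  refine linearIndependent_of_injective_natTrailingDegree
    (fun i => mul_ne_zero (hq₀ i) (pow_ne_zero _ X_ne_zero)) fun i j h => ?_
  simp only [hdeg] at h
  omega

lemma span_pow_apply_w (hD : ∀ a b : ℕ, D (w a b) = w (a + 1) b + w a (b + 1)) (m : ℕ)
    {c : ℕ} (hc : c ≤ 1) :
    span ℂ (Set.range fun i : Fin (m + 1) =>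
      (D ^ (2 * (i : ℕ) + c)) (w 0 (2 * m - 2 * (i : ℕ)))) = Asp (2 * m + c) := by
  refine (linearIndependent_pow_apply_w hD m c).span_range_eq_of_finrank_le (fun i => ?_) ?_
  · have hmem := pow_apply_mem_Asp hD (2 * (i : ℕ) + c) (w_mem_Asp (zero_add (2 * m - 2 * i)))
    rwa [show 2 * m - 2 * (i : ℕ) + (2 * (i : ℕ) + c) = 2 * m + c by omega] at hmem
  · refine (finrank_Asp_le _).trans ?_
    rw [Fintype.card_fin]
    omega

end Derivative

/-- With `∂(ω_{a,b}) = ω_{a+1,b} + ω_{a,b+1}` and `j^{2m} = ω_{0,2m}`, the sets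
`{∂^{2i} j^{2m−2i} : 0 ≤ i ≤ m}` and `{∂^{2i+1} j^{2m−2i} : 0 ≤ i ≤ m}` are bases
of `A_{2m}` and `A_{2m+1}` respectively. -/
theorem derivative_bases (D : ((ℕ × ℕ) →₀ ℂ) →ₗ[ℂ] ((ℕ × ℕ) →₀ ℂ))
    (hD : ∀ a b : ℕ, D (w a b) = w (a + 1) b + w a (b + 1)) (m : ℕ) :
    (LinearIndependent ℂ
        (fun i : Fin (m + 1) => (D ^ (2 * (i : ℕ))) (w 0 (2 * m - 2 * (i : ℕ)))) ∧
      Submodule.span ℂ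
          (Set.range fun i : Fin (m + 1) =>
            (D ^ (2 * (i : ℕ))) (w 0 (2 * m - 2 * (i : ℕ)))) = Asp (2 * m)) ∧
    (LinearIndependent ℂ
        (fun i : Fin (m + 1) => (D ^ (2 * (i : ℕ) + 1)) (w 0 (2 * m - 2 * (i : ℕ)))) ∧
      Submodule.span ℂ
          (Set.range fun i : Fin (m + 1) =>
            (D ^ (2 * (i : ℕ) + 1)) (w 0 (2 * m - 2 * (i : ℕ)))) = Asp (2 * m + 1)) := by
  have hEven :=
    And.intro (linearIndependent_pow_apply_w hD m 0) (span_pow_apply_w hD m zero_le_one)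
  simp only [add_zero] at hEven
  exact ⟨hEven, linearIndependent_pow_apply_w hD m 1, span_pow_apply_w hD m le_rfl⟩
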